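/- arXiv:2006.04399 — 6 statements merged into one kernel-verified Lean document; each statement's English description precedes it below -/
import Mathlib

section
/- Markov's Principle (for every f : ℕ → Bool, ¬¬(∃ n, f n = true) → ∃ n, f n = true) holds if and only if every enumerable predicate on a discrete type is stable under double negation. -/
/-!
For an enumerable `p` on a discrete type, `¬¬ p x` is `¬¬ ∃ n, f n = some x` with a decidable
test `f n = some x`, so Markov's Principle applies. Conversely, `∃ n, f n = true` is an enumerable
predicate on `Unit`, so its stability is exactly Markov's Principle for `f`.
-/

def MarkovPrinciple : Prop :=
  ∀ f : ℕ → Bool, ¬¬(∃ n, f n = true) → ∃ n, f n = true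

theorem MarkovPrinciple.exists_of_not_not {q : ℕ → Prop} [DecidablePred q]
    (mp : MarkovPrinciple) (h : ¬¬∃ n, q n) : ∃ n, q n := by
  have := mp (fun n => decide (q n)) (by simpa only [decide_eq_true_eq])
  simpa only [decide_eq_true_eq] using this

theorem MarkovPrinciple.of_not_not_of_enumerable {X : Type*} [DecidableEq X] {p : X → Prop}
    (mp : MarkovPrinciple) (f : ℕ → Option X) (hf : ∀ x, p x ↔ ∃ n, f n = some x) (x : X)
    (h : ¬¬p x) : p x :=
  (hf x).2 <| mp.exists_of_not_not <| by simpa only [hf] using h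

theorem exists_eq_true_iff_exists_ite_eq_some {α : Type*} (f : ℕ → Bool) (a : α) :
    (∃ n, f n = true) ↔ ∃ n, (if f n = true then some a else none) = some a := by
  simp

/-- Markov's Principle holds iff every enumerable predicate on a discrete type
is stable under double negation. -/
theorem stmt0 :
    (∀ f : ℕ → Bool, ¬¬(∃ n, f n = true) → ∃ n, f n = true) ↔
      (∀ (X : Type) (p : X → Prop),
        (∃ d : X → X → Bool, ∀ x y : X, x = y ↔ d x y = true) →
        (∃ f : ℕ → Option X, ∀ x, p x ↔ ∃ n, f n = some x) →
        ∀ x, ¬¬ p x → p x) := by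
  constructor
  · rintro mp X p ⟨d, hd⟩ ⟨f, hf⟩
    let _ : DecidableEq X := fun x y => decidable_of_iff _ (hd x y).symm
    exact MarkovPrinciple.of_not_not_of_enumerable mp f hf
  · intro stable f
    exact stable Unit (fun _ => ∃ n, f n = true) ⟨fun _ _ => true, by simp⟩
      ⟨_, fun () => exists_eq_true_iff_exists_ite_eq_some f ()⟩ ()
end

section
/- Every Heyting algebra embeds into a complete Heyting algebra via a map f preserving order (x ≤ y ↔ f x ≤ f y) and preserving bottom, implication, meet, and join up to equivalence (MacNeille completion). -/
/-- A Heyting algebra on a preorder, satisfying the adjunction laws. -/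
structure HeytingPre where
  H : Type
  le : H → H → Prop
  le_refl : ∀ x, le x x
  le_trans : ∀ x y z, le x y → le y z → le x z
  bot : H
  meet : H → H → H
  join : H → H → H
  himp : H → H → H
  bot_le : ∀ x, le bot x
  himp_adj : ∀ x y z, le (meet z x) y ↔ le z (himp x y)
  meet_adj : ∀ x y z, (le z x ∧ le z y) ↔ le z (meet x y)
  join_adj : ∀ x y z, (le x z ∧ le y z) ↔ le (join x y) z

/-- A complete Heyting algebra: arbitrary meets of subsets. -/
structure CompleteHeytingPre extends HeytingPre where
  inf : (H → Prop) → H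
  inf_adj : ∀ (P : H → Prop) (x : H), (∀ y, P y → le x y) ↔ le x (inf P)

/-- Equivalence: mutual ≤. -/
def HeytingPre.equiv (A : HeytingPre) (x y : A.H) : Prop := A.le x y ∧ A.le y x

/-!
Send `x` to its principal down-set `{z | z ≤ x}` inside the down-complete sets `X`
(those with `L (U X) ⊆ X`), ordered by inclusion. Meets, binary and arbitrary, are
intersections, the join of `X` and `Y` is `L (U (X ∪ Y))`, and
`X ⇒ Y = {z | ∀ w ∈ X, z ⊓ w ∈ Y}`.
Each operation of the algebra is characterised by the same adjunction as its counterpart on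
down-complete sets, so the principal down-sets are closed under all of them up to equivalence.
-/

namespace HeytingPre

variable {A : HeytingPre}

theorem equiv_refl (x : A.H) : A.equiv x x :=
  ⟨A.le_refl x, A.le_refl x⟩

theorem meet_le_left (x y : A.H) : A.le (A.meet x y) x :=
  ((A.meet_adj x y _).mpr (A.le_refl _)).1

theorem meet_le_right (x y : A.H) : A.le (A.meet x y) y :=
  ((A.meet_adj x y _).mpr (A.le_refl _)).2

theorem le_meet_self (x : A.H) : A.le x (A.meet x x) :=
  (A.meet_adj x x x).mp ⟨A.le_refl x, A.le_refl x⟩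

theorem le_join_left (x y : A.H) : A.le x (A.join x y) :=
  ((A.join_adj x y _).mpr (A.le_refl _)).1

theorem le_join_right (x y : A.H) : A.le y (A.join x y) :=
  ((A.join_adj x y _).mpr (A.le_refl _)).2

theorem meet_le_of_le_himp {x y z w : A.H} (hz : A.le z (A.himp x y)) (hw : A.le w x) :
    A.le (A.meet z w) y :=
  have hzw : A.le (A.meet z w) (A.meet z x) :=
    (A.meet_adj z x _).mp ⟨meet_le_left z w, A.le_trans _ w x (meet_le_right z w) hw⟩
  A.le_trans _ _ _ hzw ((A.himp_adj x y z).mpr hz)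

variable (A)

def upperBounds (X : A.H → Prop) (u : A.H) : Prop := ∀ x, X x → A.le x u

def lowerBounds (S : A.H → Prop) (z : A.H) : Prop := ∀ u, S u → A.le z u

def IsDownComplete (X : A.H → Prop) : Prop :=
  ∀ z, A.lowerBounds (A.upperBounds X) z → X z

def Iic (x : A.H) (z : A.H) : Prop := A.le z x

variable {A}

theorem lowerBounds_upperBounds_of_mem {X : A.H → Prop} {x : A.H} (hx : X x) :
    A.lowerBounds (A.upperBounds X) x :=
  fun _ hu => hu x hx

theorem IsDownComplete.of_le {X : A.H → Prop} (hX : A.IsDownComplete X) {x y : A.H}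
    (hx : X x) (hyx : A.le y x) : X y :=
  hX y fun u hu => A.le_trans y x u hyx (hu x hx)

theorem isDownComplete_lowerBounds (S : A.H → Prop) : A.IsDownComplete (A.lowerBounds S) :=
  fun _ hz u hu => hz u fun _ hw => hw u hu

theorem isDownComplete_Iic (x : A.H) : A.IsDownComplete (A.Iic x) :=
  fun _ hz => hz x fun _ hw => hw

theorem isDownComplete_sInter (P : {X : A.H → Prop // A.IsDownComplete X} → Prop) :
    A.IsDownComplete fun z => ∀ X, P X → X.1 z :=
  fun _ hz X hX => X.2 _ fun u hu => hz u fun _ hw => hu _ (hw X hX)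

theorem isDownComplete_inter {X Y : A.H → Prop} (hX : A.IsDownComplete X)
    (hY : A.IsDownComplete Y) : A.IsDownComplete fun z => X z ∧ Y z :=
  fun _ hz => ⟨hX _ fun u hu => hz u fun _ hw => hu _ hw.1,
    hY _ fun u hu => hz u fun _ hw => hu _ hw.2⟩

/-- For `w ∈ X`, `u ↦ w ⇒ u` sends upper bounds of `Y` to upper bounds of `X ⇒ Y`. -/
theorem isDownComplete_himp (X : A.H → Prop) {Y : A.H → Prop} (hY : A.IsDownComplete Y) :
    A.IsDownComplete fun z => ∀ w, X w → Y (A.meet z w) := by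
  intro z hz w hw
  refine hY _ fun u hu => (A.himp_adj w u z).mpr (hz _ fun v hv => ?_)
  exact (A.himp_adj w u v).mp (hu _ (hv w hw))

variable (A)

def completion : CompleteHeytingPre where
  H := {X : A.H → Prop // A.IsDownComplete X}
  le X Y := ∀ z, X.1 z → Y.1 z
  le_refl _ _ h := h
  le_trans _ _ _ h₁ h₂ z hz := h₂ z (h₁ z hz)
  bot := ⟨A.Iic A.bot, isDownComplete_Iic A.bot⟩
  meet X Y := ⟨fun z => X.1 z ∧ Y.1 z, isDownComplete_inter X.2 Y.2⟩
  join X Y :=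
    ⟨A.lowerBounds (A.upperBounds fun z => X.1 z ∨ Y.1 z), isDownComplete_lowerBounds _⟩
  himp X Y := ⟨fun z => ∀ w, X.1 w → Y.1 (A.meet z w), isDownComplete_himp X.1 Y.2⟩
  inf P := ⟨fun z => ∀ X, P X → X.1 z, isDownComplete_sInter P⟩
  bot_le X z hz := X.2.of_le (X.2 A.bot fun u _ => A.bot_le u) hz
  himp_adj X Y Z := by
    constructor
    · intro h z hz w hw
      exact h _ ⟨Z.2.of_le hz (meet_le_left z w), X.2.of_le hw (meet_le_right z w)⟩
    · intro h z hz
      exact Y.2.of_le (h z hz.1 z hz.2) (le_meet_self z)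
  meet_adj _ _ _ := ⟨fun h z hz => ⟨h.1 z hz, h.2 z hz⟩,
    fun h => ⟨fun z hz => (h z hz).1, fun z hz => (h z hz).2⟩⟩
  join_adj X Y Z := by
    constructor
    · rintro ⟨hXZ, hYZ⟩ z hz
      refine Z.2 z fun u hu => hz u ?_
      rintro w (hw | hw)
      exacts [hu w (hXZ w hw), hu w (hYZ w hw)]
    · intro h
      exact ⟨fun z hz => h z (lowerBounds_upperBounds_of_mem (Or.inl hz)),
        fun z hz => h z (lowerBounds_upperBounds_of_mem (Or.inr hz))⟩
  inf_adj _ _ := ⟨fun h z hz Y hY => h Y hY z hz, fun h Y hY z hz => h z hz Y hY⟩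

def principal (x : A.H) : (completion A).H := ⟨A.Iic x, isDownComplete_Iic x⟩

variable {A}

theorem principal_le_principal_iff {x y : A.H} :
    (completion A).le (principal A x) (principal A y) ↔ A.le x y :=
  ⟨fun h => h x (A.le_refl x), fun h z hz => A.le_trans z x y hz h⟩

theorem principal_bot_equiv : (completion A).equiv (principal A A.bot) (completion A).bot :=
  equiv_refl _

theorem principal_himp_equiv (x y : A.H) :
    (completion A).equiv (principal A (A.himp x y))
      ((completion A).himp (principal A x) (principal A y)) :=
  ⟨fun _ hz _ hw => meet_le_of_le_himp hz hw,
    fun z hz => (A.himp_adj x y z).mp (hz x (A.le_refl x))⟩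

theorem principal_meet_equiv (x y : A.H) :
    (completion A).equiv (principal A (A.meet x y))
      ((completion A).meet (principal A x) (principal A y)) :=
  ⟨fun z hz => (A.meet_adj x y z).mpr hz, fun z hz => (A.meet_adj x y z).mp hz⟩

theorem principal_join_equiv (x y : A.H) :
    (completion A).equiv (principal A (A.join x y))
      ((completion A).join (principal A x) (principal A y)) := by
  constructor
  · intro z hz u hu
    have hxy : A.le (A.join x y) u :=
      (A.join_adj x y u).mp ⟨hu x (Or.inl (A.le_refl x)), hu y (Or.inr (A.le_refl y))⟩
    exact A.le_trans z _ u hz hxy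
  · intro z hz
    refine hz _ ?_
    rintro w (hw | hw)
    exacts [A.le_trans w x _ hw (le_join_left x y), A.le_trans w y _ hw (le_join_right x y)]

end HeytingPre

/-- MacNeille completion: every Heyting algebra embeds into a complete Heyting
algebra via an order-reflecting map preserving 0, ⇒, ⊓, ⊔ up to equivalence. -/
theorem stmt3 (A : HeytingPre) :
    ∃ (C : CompleteHeytingPre) (f : A.H → C.H),
      (∀ x y : A.H, A.le x y ↔ C.le (f x) (f y)) ∧
      C.toHeytingPre.equiv (f A.bot) C.bot ∧
      (∀ x y : A.H, C.toHeytingPre.equiv (f (A.himp x y)) (C.himp (f x) (f y))) ∧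
      (∀ x y : A.H, C.toHeytingPre.equiv (f (A.meet x y)) (C.meet (f x) (f y))) ∧
      (∀ x y : A.H, C.toHeytingPre.equiv (f (A.join x y)) (C.join (f x) (f y))) :=
  ⟨HeytingPre.completion A, HeytingPre.principal A,
    fun _ _ => HeytingPre.principal_le_principal_iff.symm, HeytingPre.principal_bot_equiv,
    HeytingPre.principal_himp_equiv, HeytingPre.principal_meet_equiv,
    HeytingPre.principal_join_equiv⟩
end

section
/- The MacNeille completion of a Boolean (Heyting) algebra is Boolean: if H satisfies (x ⇒ y) ⇒ x ≤ x for all x, y, then so does its completion by down-complete sets. -/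
/-- The set of lower bounds of `X`. -/
def HeytingPre.lb (A : HeytingPre) (X : A.H → Prop) : A.H → Prop :=
  fun x => ∀ y, X y → A.le x y

/-- The set of upper bounds of `X`. -/
def HeytingPre.ub (A : HeytingPre) (X : A.H → Prop) : A.H → Prop :=
  fun x => ∀ y, X y → A.le y x

/-- Down-complete sets: `L (U X) ⊆ X`. These form the MacNeille completion,
ordered by inclusion. -/
def HeytingPre.DownComplete (A : HeytingPre) (X : A.H → Prop) : Prop :=
  ∀ x, A.lb (A.ub X) x → X x

/-- Implication in the MacNeille completion. -/
def HeytingPre.cimp (A : HeytingPre) (X Y : A.H → Prop) : A.H → Prop :=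
  fun x => ∀ y, X y → Y (A.meet x y)

/-!
Let `x ∈ ((X ⇒ Y) ⇒ X)` and let `u` be an upper bound of `X`; since `X` is down-complete it
suffices to show `x ≤ u`. The pseudo-complement `¬u = u ⇒ 0` lies in `X ⇒ Y`, because
`¬u ⊓ z ≤ ¬u ⊓ u ≤ 0` for `z ∈ X` and every down-complete set contains everything below `0`.
Hence `x ⊓ ¬u ∈ X`, so `x ⊓ ¬u ≤ u`, i.e. `x ≤ ¬u ⇒ u`, and Peirce's law gives `¬u ⇒ u ≤ u`.
-/

namespace HeytingPre

variable (A : HeytingPre)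

theorem meet_le_left_s4 (a b : A.H) : A.le (A.meet a b) a :=
  ((A.meet_adj a b _).mpr (A.le_refl _)).1

theorem meet_le_right_s4 (a b : A.H) : A.le (A.meet a b) b :=
  ((A.meet_adj a b _).mpr (A.le_refl _)).2

theorem himp_meet_le (a b : A.H) : A.le (A.meet (A.himp a b) a) b :=
  (A.himp_adj a b _).mpr (A.le_refl _)

variable {A}

theorem DownComplete.mem_of_le_bot {Y : A.H → Prop} (hY : A.DownComplete Y) {a : A.H}
    (ha : A.le a A.bot) : Y a :=
  hY a fun w _ => A.le_trans _ _ _ ha (A.bot_le w)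

theorem cimp_himp_bot_of_ub {X Y : A.H → Prop} (hY : A.DownComplete Y) {u : A.H}
    (hu : A.ub X u) : A.cimp X Y (A.himp u A.bot) := by
  intro z hz
  apply hY.mem_of_le_bot
  have hle : A.le (A.meet (A.himp u A.bot) z) (A.meet (A.himp u A.bot) u) :=
    (A.meet_adj _ _ _).mp
      ⟨A.meet_le_left_s4 _ _, A.le_trans _ _ _ (A.meet_le_right_s4 _ _) (hu z hz)⟩
  exact A.le_trans _ _ _ hle (A.himp_meet_le u A.bot)

theorem le_of_meet_himp_le {x u y : A.H} (hPeirce : A.le (A.himp (A.himp u y) u) u)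
    (h : A.le (A.meet x (A.himp u y)) u) : A.le x u :=
  A.le_trans _ _ _ ((A.himp_adj _ _ _).mp h) hPeirce

end HeytingPre

/-- If `A` is Boolean (satisfies Peirce's law), then its MacNeille completion is
Boolean: Peirce's law `(X ⇒ Y) ⇒ X ⊆ X` holds for down-complete sets. -/
theorem stmt4 (A : HeytingPre)
    (hBool : ∀ x y : A.H, A.le (A.himp (A.himp x y) x) x)
    (X Y : A.H → Prop) (hX : A.DownComplete X) (hY : A.DownComplete Y) :
    ∀ x, A.cimp (A.cimp X Y) X x → X x := by
  intro x hx
  refine hX x fun u hu => ?_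
  have hcompl : X (A.meet x (A.himp u A.bot)) := hx _ (HeytingPre.cimp_himp_bot_of_ub hY hu)
  exact HeytingPre.le_of_meet_himp_le (hBool u A.bot) (hu _ hcompl)
end

section
/- Assuming excluded middle and Weak Kőnig's Lemma, every predicate on the natural numbers is decidable: for every p : ℕ → Prop there is f : ℕ → Bool with ∀ n, p n ↔ f n = true. -/
/-!
The Boolean lists that correctly decide `p` on their own index range form a binary tree.
Excluded middle lets every such list be extended by one correct bit, so the tree is infinite,
and the path that Weak Kőnig's Lemma provides through it is a characteristic function of `p`.
-/

/-- A binary tree: a non-empty, prefix-closed predicate on Boolean lists. -/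
def IsTree (τ : List Bool → Prop) : Prop :=
  τ [] ∧ ∀ u v : List Bool, u <+: v → τ v → τ u

/-- A tree is infinite if it contains elements of every length. -/
def TreeInfinite (τ : List Bool → Prop) : Prop :=
  ∀ k : ℕ, ∃ u : List Bool, τ u ∧ u.length ≥ k

/-- An infinite path through a tree. -/
def HasInfinitePath (τ : List Bool → Prop) : Prop :=
  ∃ f : ℕ → Bool, ∀ n : ℕ, τ ((List.range (n + 1)).map f)

/-- Weak Kőnig's Lemma. -/
def WKL : Prop := ∀ τ : List Bool → Prop, IsTree τ → TreeInfinite τ → HasInfinitePath τ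

def DecidesOn (p : ℕ → Prop) (u : List Bool) : Prop :=
  ∀ i : ℕ, (h : i < u.length) → (p i ↔ u[i] = true)

namespace DecidesOn

variable {p : ℕ → Prop}

theorem nil : DecidesOn p [] := fun _ h => absurd h (Nat.not_lt_zero _)

theorem of_isPrefix {u v : List Bool} (huv : u <+: v) (hv : DecidesOn p v) : DecidesOn p u :=
  fun i h => huv.getElem h ▸ hv i (h.trans_le huv.length_le)

theorem append_singleton {u : List Bool} {b : Bool} (hu : DecidesOn p u)
    (hb : p u.length ↔ b = true) : DecidesOn p (u ++ [b]) := by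
  intro i h
  rw [List.length_append, List.length_singleton, Nat.lt_succ_iff] at h
  rcases h.lt_or_eq with h | rfl
  · rw [List.getElem_append_left h]
    exact hu i h
  · simpa using hb

theorem exists_of_length (hp : ∀ n, p n ∨ ¬ p n) (k : ℕ) :
    ∃ u : List Bool, DecidesOn p u ∧ u.length = k := by
  induction k with
  | zero => exact ⟨[], nil, rfl⟩
  | succ k ih =>
    obtain ⟨u, hu, rfl⟩ := ih
    have hbit : ∃ b : Bool, p u.length ↔ b = true := by
      rcases hp u.length with h | h
      · exact ⟨true, by simp [h]⟩
      · exact ⟨false, by simp [h]⟩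
    obtain ⟨b, hb⟩ := hbit
    exact ⟨u ++ [b], hu.append_singleton hb, by simp⟩

theorem isTree : IsTree (DecidesOn p) :=
  ⟨nil, fun _ _ => of_isPrefix⟩

theorem treeInfinite (hp : ∀ n, p n ∨ ¬ p n) : TreeInfinite (DecidesOn p) := fun k =>
  (exists_of_length hp k).imp fun _ ⟨hu, hlen⟩ => ⟨hu, hlen.ge⟩

theorem iff_of_map_range {f : ℕ → Bool} {n : ℕ}
    (hf : DecidesOn p ((List.range (n + 1)).map f)) : p n ↔ f n = true := by
  simpa using hf n (by simp)

end DecidesOn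

/-- EM and WKL make every predicate on ℕ decidable. -/
theorem stmt8 (em : ∀ P : Prop, P ∨ ¬ P) (wkl : WKL) (p : ℕ → Prop) :
    ∃ f : ℕ → Bool, ∀ n, p n ↔ f n = true := by
  obtain ⟨f, hf⟩ := wkl (DecidesOn p) DecidesOn.isTree
    (DecidesOn.treeInfinite fun n => em (p n))
  exact ⟨f, fun n => DecidesOn.iff_of_map_range (hf n)⟩
end

section
/- If the relation R : X → X → Prop is well-founded, then the transitive closure of the list-expansion relation ≺_R is well-founded on lists over X. Here A ≺_R B holds iff B = B' ++ x :: B'', every element c of C satisfies R c x, and A is a permutation of B' ++ C ++ B''. -/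
/-- List expansion: replace one element `x` of the list by a finite collection `C`
of `R`-predecessors of `x`, up to permutation. -/
def ListExpand {X : Type} (R : X → X → Prop) (A B : List X) : Prop :=
  ∃ (B' B'' C : List X) (x : X),
    B = B' ++ x :: B'' ∧ (∀ c ∈ C, R c x) ∧ A.Perm (B' ++ C ++ B'')

/-! Forgetting the order of a list turns an expansion step into a move of the hydra game
`Relation.CutExpand R` on multisets, which is well-founded for well-founded `R`
(`WellFounded.cutExpand`); well-foundedness then passes to the transitive closure and back along
the coercion. -/

theorem ListExpand.cutExpand_coe {X : Type} {R : X → X → Prop} {A B : List X}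
    (h : ListExpand R A B) : Relation.CutExpand R (A : Multiset X) (B : Multiset X) := by
  obtain ⟨B', B'', C, x, rfl, hC, hA⟩ := h
  refine ⟨C, x, fun c hc => hC c (Multiset.mem_coe.mp hc), ?_⟩
  rw [Multiset.coe_eq_coe.mpr hA]
  simp only [← Multiset.coe_add, ← Multiset.cons_coe, ← Multiset.singleton_add]
  abel

/-- If `R` is well-founded, the transitive closure of list expansion is well-founded. -/
theorem stmt9 {X : Type} (R : X → X → Prop) (hR : WellFounded R) :
    WellFounded (Relation.TransGen (ListExpand R)) :=
  (InvImage.wf ((↑) : List X → Multiset X) hR.cutExpand.transGen).mono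
    fun _ _ h => h.lift _ fun _ _ => ListExpand.cutExpand_coe
end

section
/- If A ≺'_R B (list-expansion without permutation: B = B' ++ x :: B'', A = B' ++ C ++ B'', all elements of C are R-below x) and both A-parts are accessible, then accessibility of ≺'_R on A and on B implies accessibility on A ++ B; moreover ≺'_R is accessible on every singleton [x] when R is well-founded, and hence ≺'_R is well-founded on all lists. -/
/-!
A `≺'_R`-step on `A ++ B` replaces one letter of `A` or one letter of `B`, so a double
well-founded induction on the accessibility of `A` and of `B` shows that accessible lists are
closed under append. A step on `[x]` yields a list of elements `R`-below `x`, i.e. an append of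
singletons which are accessible by `R`-induction on `x`; every list is then accessible as an
append of accessible singletons.
-/

/-- List expansion without permutation. -/
def ListExpand' {X : Type} (R : X → X → Prop) (A B : List X) : Prop :=
  ∃ (B' B'' C : List X) (x : X),
    B = B' ++ x :: B'' ∧ A = B' ++ C ++ B'' ∧ ∀ c ∈ C, R c x

namespace ListExpand'

variable {X : Type} {R : X → X → Prop}

theorem acc_nil : Acc (ListExpand' R) [] :=
  ⟨_, fun _ ⟨_, _, _, _, h, _⟩ => by simp at h⟩

theorem cases_append {A B L : List X} (h : ListExpand' R L (A ++ B)) :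
    (∃ A', ListExpand' R A' A ∧ L = A' ++ B) ∨ ∃ B', ListExpand' R B' B ∧ L = A ++ B' := by
  obtain ⟨B', B'', C, x, hB, rfl, hC⟩ := h
  rcases List.append_eq_append_iff.mp hB with ⟨as, rfl, rfl⟩ | ⟨bs, rfl, hbs⟩
  · exact .inr ⟨as ++ C ++ B'', ⟨as, B'', C, x, rfl, rfl, hC⟩, by simp⟩
  rcases List.cons_eq_append_iff.mp hbs with ⟨rfl, rfl⟩ | ⟨t, rfl, rfl⟩
  · exact .inr ⟨C ++ B'', ⟨[], B'', C, x, rfl, rfl, hC⟩, by simp⟩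
  · exact .inl ⟨B' ++ C ++ t, ⟨B', t, C, x, rfl, rfl, hC⟩, by simp⟩

theorem acc_append {A B : List X} (hA : Acc (ListExpand' R) A) (hB : Acc (ListExpand' R) B) :
    Acc (ListExpand' R) (A ++ B) := by
  induction hA generalizing B with
  | intro A _ ihA =>
    induction hB with
    | intro B hB' ihB =>
      refine ⟨_, fun L hL => ?_⟩
      rcases cases_append hL with ⟨A', hA', rfl⟩ | ⟨B', hB'', rfl⟩
      · exact ihA A' hA' ⟨B, hB'⟩
      · exact ihB B' hB''

theorem acc_of_forall_mem {L : List X} (h : ∀ x ∈ L, Acc (ListExpand' R) [x]) :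
    Acc (ListExpand' R) L := by
  induction L with
  | nil => exact acc_nil
  | cons x L ih =>
    exact acc_append (A := [x]) (h x List.mem_cons_self)
      (ih fun y hy => h y (List.mem_cons_of_mem x hy))

theorem acc_singleton (hR : WellFounded R) (x : X) : Acc (ListExpand' R) [x] := by
  induction x using hR.induction with
  | _ x ih =>
    refine ⟨_, fun L ⟨B', B'', C, y, hx, hL, hC⟩ => ?_⟩
    obtain ⟨rfl, rfl, rfl⟩ : B' = [] ∧ y = x ∧ B'' = [] := by
      rcases B' with _ | ⟨_, _ | _⟩ <;> simp_all
    simp only [List.nil_append, List.append_nil] at hL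
    exact hL ▸ acc_of_forall_mem fun c hc => ih c (hC c hc)

end ListExpand'

/-- For well-founded `R`: accessibility of `≺'_R` is closed under append,
holds on singletons, and hence `≺'_R` is well-founded on all lists. -/
theorem stmt10 {X : Type} (R : X → X → Prop) (hR : WellFounded R) :
    (∀ A B : List X, Acc (ListExpand' R) A → Acc (ListExpand' R) B →
        Acc (ListExpand' R) (A ++ B)) ∧
    (∀ x : X, Acc (ListExpand' R) [x]) ∧
    WellFounded (ListExpand' R) :=
  ⟨fun _ _ => ListExpand'.acc_append, ListExpand'.acc_singleton hR,
    ⟨fun _ => ListExpand'.acc_of_forall_mem fun x _ => ListExpand'.acc_singleton hR x⟩⟩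
end
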